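/- Let J be a real m×n matrix with singular values σ₁ ≥ σ₂ ≥ … and let w₁,…,w_K be any orthonormal vectors in ℝᵐ that lie in the column space of J. For each i choose δᵢ ∈ ℝⁿ of minimal norm with Jδᵢ = wᵢ. Then Σᵢ ‖δᵢ‖₂² ≥ Σᵢ₌₁ᴷ 1/σᵢ², with equality when wᵢ are the top-K left singular vectors of J (and δᵢ the scaled right singular vectors vᵢ/σᵢ). -/

import Mathlib

open Matrix

/-! Let `c i k = v k ⬝ᵥ δ i` be the coordinates of `δ i` in the eigenbasis `v` of `JᵀJ`.
Since `(J x) ⬝ᵥ (J y) = ∑ₖ σₖ² (v k ⬝ᵥ x) (v k ⬝ᵥ y)`, the vectors `u i = (σₖ c i k)ₖ` are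
orthonormal, so by Bessel the weights `tₖ = ∑ᵢ (u i k)²` lie in `[0, 1]`, and they sum to `K`.
Parseval gives `∑ᵢ ‖δ i‖² = ∑ᵢₖ (c i k)² ≥ ∑ₖ σₖ⁻² tₖ`. As `σₖ⁻²` increases with `k`, among
weights in `[0, 1]` of total mass `K` this is smallest for the indicator of the first `K`
indices, which gives `∑_{k < K} σₖ⁻²`. -/

theorem sum_mul_le_sum_mul_of_sum_eq {ι : Type*} [Fintype ι] (a e t : ι → ℝ) (β : ℝ)
    (hsum : ∑ k, e k = ∑ k, t k) (h : ∀ k, 0 ≤ (a k - β) * (t k - e k)) :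
    ∑ k, a k * e k ≤ ∑ k, a k * t k := by
  have hβ : ∑ k, β * (t k - e k) = 0 := by
    rw [← Finset.mul_sum, Finset.sum_sub_distrib, hsum, sub_self, mul_zero]
  have hdiff : ∑ k, a k * t k - ∑ k, a k * e k - ∑ k, β * (t k - e k) =
      ∑ k, (a k - β) * (t k - e k) := by
    simp only [← Finset.sum_sub_distrib]
    exact Finset.sum_congr rfl fun k _ => by ring
  linarith [Finset.sum_nonneg fun k (_ : k ∈ Finset.univ) => h k]

theorem Finset.sum_le_sum_mul_of_sum_eq_card {ι : Type*} [Fintype ι] (s : Finset ι) (a t : ι → ℝ)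
    (ht0 : ∀ k, 0 ≤ t k) (ht1 : ∀ k, t k ≤ 1) (hsum : ∑ k, t k = s.card)
    (ha : ∀ k ∈ s, ∀ l ∉ s, t l ≠ 0 → a k ≤ a l) :
    ∑ k ∈ s, a k ≤ ∑ k, a k * t k := by
  classical
  rcases s.eq_empty_or_nonempty with rfl | hs
  · have ht : ∀ k, t k = 0 := by
      simpa [Finset.sum_eq_zero_iff_of_nonneg fun k _ => ht0 k] using hsum
    simp [ht]
  have hind : ∑ k ∈ s, a k = ∑ k, a k * if k ∈ s then 1 else 0 := by
    simp [mul_ite]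
  rw [hind]
  refine sum_mul_le_sum_mul_of_sum_eq a _ t (s.sup' hs a) (by simp [hsum]) fun k => ?_
  by_cases hk : k ∈ s
  · rw [if_pos hk]
    exact mul_nonneg_of_nonpos_of_nonpos (sub_nonpos.2 (s.le_sup' a hk)) (sub_nonpos.2 (ht1 k))
  · rw [if_neg hk, sub_zero]
    rcases eq_or_ne (t k) 0 with h0 | h0
    · simp [h0]
    · exact mul_nonneg (sub_nonneg.2 (Finset.sup'_le hs a fun j hj => ha j hj k hk h0)) (ht0 k)

theorem Fin.mem_map_castLEEmb_univ {K n : ℕ} (hK : K ≤ n) (k : Fin n) :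
    k ∈ Finset.univ.map (Fin.castLEEmb hK) ↔ (k : ℕ) < K := by
  simp only [Finset.mem_map, Finset.mem_univ, true_and, Fin.castLEEmb_apply]
  exact ⟨by rintro ⟨i, rfl⟩; exact i.2, fun hk => ⟨⟨k, hk⟩, rfl⟩⟩

theorem inv_sq_mul_mul_sq_le_sq (s c : ℝ) : (s ^ 2)⁻¹ * (s * c) ^ 2 ≤ c ^ 2 := by
  rcases eq_or_ne s 0 with rfl | hs
  · simpa using sq_nonneg c
  · rw [mul_pow, ← mul_assoc, inv_mul_cancel₀ (pow_ne_zero 2 hs), one_mul]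

theorem dotProduct_mulVec_mulVec {R m n : Type*} [Fintype m] [Fintype n] [CommSemiring R]
    (J : Matrix m n R) (x y : n → R) : (J *ᵥ x) ⬝ᵥ (J *ᵥ y) = x ⬝ᵥ ((Jᵀ * J) *ᵥ y) := by
  rw [← mulVec_mulVec, dotProduct_mulVec x Jᵀ, vecMul_transpose]

section Orthonormal

variable {R n : Type*} [CommRing R] [Fintype n] [DecidableEq n] {v : n → n → R}

theorem eq_sum_dotProduct_smul_of_orthonormal
    (hv : ∀ i j, v i ⬝ᵥ v j = if i = j then 1 else 0) (x : n → R) :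
    x = ∑ k, (v k ⬝ᵥ x) • v k := by
  have hWWt : of v * (of v)ᵀ = 1 := by
    ext i j
    exact hv i j
  calc x = ((of v)ᵀ * of v) *ᵥ x := by rw [mul_eq_one_comm.mp hWWt, one_mulVec]
    _ = ∑ k, (v k ⬝ᵥ x) • v k := by rw [← mulVec_mulVec, mulVec_transpose, vecMul_eq_sum]; rfl

theorem dotProduct_self_eq_sum_sq_of_orthonormal
    (hv : ∀ i j, v i ⬝ᵥ v j = if i = j then 1 else 0) (x : n → R) :
    x ⬝ᵥ x = ∑ k, (v k ⬝ᵥ x) ^ 2 := by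
  nth_rw 2 [eq_sum_dotProduct_smul_of_orthonormal hv x]
  rw [dotProduct_sum]
  refine Finset.sum_congr rfl fun k _ => ?_
  rw [dotProduct_smul, smul_eq_mul, dotProduct_comm x, sq]

theorem dotProduct_mulVec_eq_sum_of_eigenvectors
    (hv : ∀ i j, v i ⬝ᵥ v j = if i = j then 1 else 0) {A : Matrix n n R} {μ : n → R}
    (hA : ∀ k, A *ᵥ v k = μ k • v k) (x y : n → R) :
    x ⬝ᵥ (A *ᵥ y) = ∑ k, μ k * ((v k ⬝ᵥ x) * (v k ⬝ᵥ y)) := by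
  nth_rw 1 [eq_sum_dotProduct_smul_of_orthonormal hv y]
  rw [mulVec_sum, dotProduct_sum]
  refine Finset.sum_congr rfl fun k _ => ?_
  rw [mulVec_smul, hA, dotProduct_smul, dotProduct_smul, smul_eq_mul, smul_eq_mul,
    dotProduct_comm x]
  ring

end Orthonormal

theorem sum_sq_apply_le_one_of_orthonormal {ι κ : Type*} [Fintype ι] [Fintype κ] [DecidableEq ι]
    [DecidableEq κ] (u : ι → κ → ℝ) (hu : ∀ i j, u i ⬝ᵥ u j = if i = j then 1 else 0) (k : κ) :
    ∑ i, u i k ^ 2 ≤ 1 := by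
  have hon : Orthonormal ℝ fun i => (WithLp.toLp 2 (u i) : EuclideanSpace ℝ κ) := by
    rw [orthonormal_iff_ite]
    intro i j
    simpa [EuclideanSpace.inner_eq_star_dotProduct, dotProduct_comm] using hu i j
  simpa [EuclideanSpace.inner_eq_star_dotProduct] using
    hon.sum_inner_products_le (EuclideanSpace.single k 1) (s := Finset.univ)

section SingularVectors

variable {m n : ℕ} {J : Matrix (Fin m) (Fin n) ℝ} {v : Fin n → Fin n → ℝ} {σ : Fin n → ℝ}

theorem sum_inv_sq_le_sum_dotProduct_self {K : ℕ} (hK : K ≤ n)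
    (heig : ∀ i, (Jᵀ * J) *ᵥ v i = σ i ^ 2 • v i)
    (hvortho : ∀ i j, v i ⬝ᵥ v j = if i = j then 1 else 0)
    (hdec : Antitone σ) (hσnonneg : ∀ i, 0 ≤ σ i) (δ : Fin K → Fin n → ℝ)
    (hδ : ∀ i j, (J *ᵥ δ i) ⬝ᵥ (J *ᵥ δ j) = if i = j then 1 else 0) :
    ∑ i : Fin K, (σ (Fin.castLE hK i) ^ 2)⁻¹ ≤ ∑ i, δ i ⬝ᵥ δ i := by
  classical
  set u : Fin K → Fin n → ℝ := fun i k => σ k * (v k ⬝ᵥ δ i)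
  set t : Fin n → ℝ := fun k => ∑ i, u i k ^ 2
  set s := Finset.univ.map (Fin.castLEEmb hK)
  have hu : ∀ i j, u i ⬝ᵥ u j = if i = j then 1 else 0 := fun i j => by
    rw [← hδ, dotProduct_mulVec_mulVec, dotProduct_mulVec_eq_sum_of_eigenvectors hvortho heig]
    exact Finset.sum_congr rfl fun k _ => by ring
  have ht_sum : ∑ k, t k = s.card := by
    rw [Finset.sum_comm]
    simp [sq, s, ← dotProduct.eq_def, hu]
  have hmono : ∀ k ∈ s, ∀ l ∉ s, t l ≠ 0 → (σ k ^ 2)⁻¹ ≤ (σ l ^ 2)⁻¹ := by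
    intro k hk l hl htl
    rw [Fin.mem_map_castLEEmb_univ] at hk hl
    have hσl : 0 < σ l := (hσnonneg l).lt_of_ne' fun h => htl (by simp [t, u, h])
    exact inv_anti₀ (by positivity) (pow_le_pow_left₀ hσl.le (hdec (by omega)) 2)
  calc ∑ i : Fin K, (σ (Fin.castLE hK i) ^ 2)⁻¹ = ∑ k ∈ s, (σ k ^ 2)⁻¹ := by
        simp [s, Finset.sum_map]
    _ ≤ ∑ k, (σ k ^ 2)⁻¹ * t k :=
        s.sum_le_sum_mul_of_sum_eq_card _ t (fun k => Finset.sum_nonneg fun i _ => sq_nonneg _)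
          (sum_sq_apply_le_one_of_orthonormal u hu) ht_sum hmono
    _ = ∑ i, ∑ k, (σ k ^ 2)⁻¹ * u i k ^ 2 := by
        simp only [t, Finset.mul_sum]
        exact Finset.sum_comm
    _ ≤ ∑ i, δ i ⬝ᵥ δ i := Finset.sum_le_sum fun i _ => by
        rw [dotProduct_self_eq_sum_sq_of_orthonormal hvortho]
        exact Finset.sum_le_sum fun k _ => inv_sq_mul_mul_sq_le_sq _ _

theorem dotProduct_inv_smul_mulVec_eigenvector
    (heig : ∀ i, (Jᵀ * J) *ᵥ v i = σ i ^ 2 • v i)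
    (hvortho : ∀ i j, v i ⬝ᵥ v j = if i = j then 1 else 0) {i : Fin n} (hi : σ i ≠ 0) (j : Fin n) :
    ((σ i)⁻¹ • J *ᵥ v i) ⬝ᵥ ((σ j)⁻¹ • J *ᵥ v j) = if i = j then 1 else 0 := by
  rw [smul_dotProduct, dotProduct_smul, dotProduct_mulVec_mulVec, heig, dotProduct_smul, hvortho]
  split_ifs with h
  · subst h
    simp only [smul_eq_mul, mul_one]
    field_simp
  · simp

end SingularVectors

theorem stmt_11_general {m n K : ℕ} (hK : K ≤ n) (J : Matrix (Fin m) (Fin n) ℝ)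
    (v : Fin n → (Fin n → ℝ)) (σ : Fin n → ℝ)
    (heig : ∀ i, (Jᵀ * J) *ᵥ v i = (σ i) ^ 2 • v i)
    (hvortho : ∀ i j, v i ⬝ᵥ v j = if i = j then 1 else 0)
    (hdec : Antitone σ) (hσnonneg : ∀ i, 0 ≤ σ i)
    (hpos : ∀ i : Fin K, 0 < σ (Fin.castLE hK i))
    (w : Fin K → (Fin m → ℝ)) (hwortho : ∀ i j, w i ⬝ᵥ w j = if i = j then 1 else 0)
    (δ : Fin K → (Fin n → ℝ))
    (hδ : ∀ i, J *ᵥ δ i = w i) :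
    (∑ i, δ i ⬝ᵥ δ i ≥ ∑ i : Fin K, ((σ (Fin.castLE hK i)) ^ 2)⁻¹) ∧
      (∀ i : Fin K, ∀ j : Fin K, ((σ (Fin.castLE hK i))⁻¹ • J *ᵥ v (Fin.castLE hK i)) ⬝ᵥ
          ((σ (Fin.castLE hK j))⁻¹ • J *ᵥ v (Fin.castLE hK j)) = if i = j then 1 else 0) ∧
      (∑ i : Fin K, ((σ (Fin.castLE hK i))⁻¹ • v (Fin.castLE hK i)) ⬝ᵥ
          ((σ (Fin.castLE hK i))⁻¹ • v (Fin.castLE hK i)) =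
        ∑ i : Fin K, ((σ (Fin.castLE hK i)) ^ 2)⁻¹) := by
  refine ⟨sum_inv_sq_le_sum_dotProduct_self hK heig hvortho hdec hσnonneg δ
    fun i j => by rw [hδ, hδ, hwortho], fun i j => ?_, Finset.sum_congr rfl fun i _ => ?_⟩
  · rw [dotProduct_inv_smul_mulVec_eigenvector heig hvortho (hpos i).ne']
    simp only [Fin.castLE_inj]
  · rw [smul_dotProduct, dotProduct_smul, hvortho, if_pos rfl, smul_eq_mul, smul_eq_mul, mul_one]
    ring

/-- Optimality of the top-K singular directions: let J have singular values
σ₁ ≥ σ₂ ≥ … (encoded via an orthonormal eigenbasis v of JᵀJ with eigenvalues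
σᵢ²), let w₁,…,w_K be orthonormal vectors in the column space of J and δᵢ the
minimal-norm preimages Jδᵢ = wᵢ. Then Σᵢ‖δᵢ‖₂² ≥ Σᵢ₌₁ᴷ 1/σᵢ², and the choice
δᵢ = vᵢ/σᵢ (whose images are the top-K left singular vectors) attains this
bound. -/
theorem stmt_11 {m n K : ℕ} (hK : K ≤ n) (J : Matrix (Fin m) (Fin n) ℝ)
    (v : Fin n → (Fin n → ℝ)) (σ : Fin n → ℝ)
    (heig : ∀ i, (Jᵀ * J) *ᵥ v i = (σ i) ^ 2 • v i)
    (hvortho : ∀ i j, v i ⬝ᵥ v j = if i = j then 1 else 0)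
    (hdec : Antitone σ) (hσnonneg : ∀ i, 0 ≤ σ i)
    (hpos : ∀ i : Fin K, 0 < σ (Fin.castLE hK i))
    (w : Fin K → (Fin m → ℝ)) (hwortho : ∀ i j, w i ⬝ᵥ w j = if i = j then 1 else 0)
    (δ : Fin K → (Fin n → ℝ))
    (hδ : ∀ i, J *ᵥ δ i = w i)
    (hmin : ∀ i, ∀ x : Fin n → ℝ, J *ᵥ x = w i → δ i ⬝ᵥ δ i ≤ x ⬝ᵥ x) :
    (∑ i, δ i ⬝ᵥ δ i ≥ ∑ i : Fin K, ((σ (Fin.castLE hK i)) ^ 2)⁻¹) ∧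
      (∀ i : Fin K, ∀ j : Fin K, ((σ (Fin.castLE hK i))⁻¹ • J *ᵥ v (Fin.castLE hK i)) ⬝ᵥ
          ((σ (Fin.castLE hK j))⁻¹ • J *ᵥ v (Fin.castLE hK j)) = if i = j then 1 else 0) ∧
      (∑ i : Fin K, ((σ (Fin.castLE hK i))⁻¹ • v (Fin.castLE hK i)) ⬝ᵥ
          ((σ (Fin.castLE hK i))⁻¹ • v (Fin.castLE hK i)) =
        ∑ i : Fin K, ((σ (Fin.castLE hK i)) ^ 2)⁻¹) :=
  stmt_11_general hK J v σ heig hvortho hdec hσnonneg hpos w hwortho δ hδ
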